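/- arXiv:1008.0596 — 9 statements merged into one kernel-verified Lean document; each statement's English description precedes it below -/
import Mathlib

section
/- Let a, b, c be positive integers and d a negative integer. Then the projective variety in P^5 over the reals, with coordinates (s,t,u,x,y,z), defined by d·s^2 = xy + 5z^2, d·(s^2 - 5t^2) = (x+y)(x+2y), d·u^2 = ax^2 + by^2 + cz^2 has no real points. -/
/-- For positive integers `a, b, c` and a negative integer `d`, the projective variety in `ℙ⁵`
over `ℝ` cut out by `d·s² = xy + 5z²`, `d·(s² - 5t²) = (x+y)(x+2y)`,
`d·u² = ax² + by² + cz²` has no real points: every real solution is the zero solution. -/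
theorem statement3 (a b c d : ℤ) (ha : 0 < a) (hb : 0 < b) (hc : 0 < c) (hd : d < 0)
    (s t u x y z : ℝ)
    (h1 : (d : ℝ) * s ^ 2 = x * y + 5 * z ^ 2)
    (h2 : (d : ℝ) * (s ^ 2 - 5 * t ^ 2) = (x + y) * (x + 2 * y))
    (h3 : (d : ℝ) * u ^ 2 = (a : ℝ) * x ^ 2 + (b : ℝ) * y ^ 2 + (c : ℝ) * z ^ 2) :
    s = 0 ∧ t = 0 ∧ u = 0 ∧ x = 0 ∧ y = 0 ∧ z = 0 := by
  have ha' : (1:ℝ) ≤ (a:ℝ) := by exact_mod_cast ha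
  have hb' : (1:ℝ) ≤ (b:ℝ) := by exact_mod_cast hb
  have hc' : (1:ℝ) ≤ (c:ℝ) := by exact_mod_cast hc
  have hd' : (d:ℝ) < 0 := by exact_mod_cast hd
  have h4 : (d : ℝ) * u ^ 2 ≤ 0 :=
    mul_nonpos_of_nonpos_of_nonneg (le_of_lt hd') (sq_nonneg u)
  have hax : (0:ℝ) ≤ (a:ℝ) * x ^ 2 := mul_nonneg (by linarith) (sq_nonneg x)
  have hby : (0:ℝ) ≤ (b:ℝ) * y ^ 2 := mul_nonneg (by linarith) (sq_nonneg y)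
  have hcz : (0:ℝ) ≤ (c:ℝ) * z ^ 2 := mul_nonneg (by linarith) (sq_nonneg z)
  have hax0 : (a:ℝ) * x ^ 2 = 0 := by linarith
  have hby0 : (b:ℝ) * y ^ 2 = 0 := by linarith
  have hcz0 : (c:ℝ) * z ^ 2 = 0 := by linarith
  have hx : x = 0 := by
    have := mul_eq_zero.mp hax0
    rcases this with h | h
    · linarith
    · exact pow_eq_zero_iff (by norm_num) |>.mp h
  have hy : y = 0 := by
    rcases mul_eq_zero.mp hby0 with h | h
    · linarith
    · exact pow_eq_zero_iff (by norm_num) |>.mp h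
  have hz : z = 0 := by
    rcases mul_eq_zero.mp hcz0 with h | h
    · linarith
    · exact pow_eq_zero_iff (by norm_num) |>.mp h
  have hu : u = 0 := by
    have hdu : (d:ℝ) * u ^ 2 = 0 := by rw [h3, hax0, hby0, hcz0]; ring
    rcases mul_eq_zero.mp hdu with h | h
    · linarith
    · exact pow_eq_zero_iff (by norm_num) |>.mp h
  subst hx hy hz
  have hs2 : (d:ℝ) * s ^ 2 = 0 := by rw [h1]; ring
  have hs : s = 0 := by
    rcases mul_eq_zero.mp hs2 with h | h
    · linarith
    · exact pow_eq_zero_iff (by norm_num) |>.mp h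
  subst hs
  have ht2 : (d:ℝ) * t ^ 2 = 0 := by nlinarith [h2]
  have ht : t = 0 := by
    rcases mul_eq_zero.mp ht2 with h | h
    · linarith
    · exact pow_eq_zero_iff (by norm_num) |>.mp h
  exact ⟨rfl, ht, hu, rfl, rfl, rfl⟩
end

section
/- Suppose a, b, c are positive integers such that the quadratic form a·x^2 + b·y^2 + c·z^2 + u^2 is anisotropic over ℚ_3, and d is an integer with d ≡ 2 (mod 3). Then the system s^2 = d(xy + 5z^2), s^2 - 5t^2 = d(x+y)(x+2y), u^2 = d(ax^2 + by^2 + cz^2) — equivalently the projective variety Y^(d) in P^5 over ℚ_3 defined by d·(xy+5z^2) = s^2, d·((x+y)(x+2y)) = s^2 - 5t^2, d·(ax^2+by^2+cz^2) = u^2 — has no ℚ_3-points. -/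
/-! Since `-d ≡ 1 (mod 3)`, Hensel's lemma makes `-d = m²` a square in `ℚ₃`. The third equation
then says that the anisotropic form vanishes at `(x, y, z, u / m)`, so `x = y = z = u = 0`, and
the first two equations collapse to `s² = 0` and `5t² = 0`. -/

open Polynomial in
theorem PadicInt.isSquare_intCast_of_modEq_one {p : ℕ} [Fact p.Prime] (hp : p ≠ 2) {n : ℤ}
    (hn : n ≡ 1 [ZMOD p]) : IsSquare (n : ℤ_[p]) := by
  set F : ℤ_[p][X] := X ^ 2 - C (n : ℤ_[p])
  have hF : F.aeval (1 : ℤ_[p]) = ((1 - n : ℤ) : ℤ_[p]) := by simp [F]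
  have hF' : F.derivative.aeval (1 : ℤ_[p]) = ((2 : ℤ) : ℤ_[p]) := by
    simp [F, one_add_one_eq_two]
  have htwo : ‖F.derivative.aeval (1 : ℤ_[p])‖ = 1 := by
    rw [hF', norm_intCast_eq_one_iff]
    exact_mod_cast Nat.isCoprime_iff_coprime.mpr
      ((Nat.coprime_primes Nat.prime_two Fact.out).mpr hp.symm)
  have hnorm : ‖F.aeval (1 : ℤ_[p])‖ < ‖F.derivative.aeval (1 : ℤ_[p])‖ ^ 2 := by
    rw [htwo, one_pow, hF, norm_intCast_lt_one_iff]
    exact hn.dvd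
  obtain ⟨m, hm, -⟩ := hensels_lemma hnorm
  exact ⟨m, by simpa [F, sub_eq_zero, sq, eq_comm] using hm⟩

theorem eq_zero_of_neg_isSquare_mul_eq_sq {K : Type*} [Field K] {a b c d x y z u : K}
    (haniso : ∀ x y z u : K, a * x ^ 2 + b * y ^ 2 + c * z ^ 2 + u ^ 2 = 0 →
      x = 0 ∧ y = 0 ∧ z = 0 ∧ u = 0)
    (hd : d ≠ 0) (hsq : IsSquare (-d)) (h : d * (a * x ^ 2 + b * y ^ 2 + c * z ^ 2) = u ^ 2) :
    x = 0 ∧ y = 0 ∧ z = 0 ∧ u = 0 := by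
  obtain ⟨m, hm⟩ := hsq
  have hm0 : m ≠ 0 := by rintro rfl; exact hd (by simpa using hm)
  obtain ⟨hx, hy, hz, hu⟩ := haniso x y z (u / m) (by
    field_simp
    linear_combination -h - (a * x ^ 2 + b * y ^ 2 + c * z ^ 2) * hm)
  exact ⟨hx, hy, hz, by simpa [hm0] using hu⟩

theorem statement4_general (a b c d : ℤ)
    (haniso : ∀ x y z u : ℚ_[3],
      (a : ℚ_[3]) * x ^ 2 + (b : ℚ_[3]) * y ^ 2 + (c : ℚ_[3]) * z ^ 2 + u ^ 2 = 0 →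
      x = 0 ∧ y = 0 ∧ z = 0 ∧ u = 0)
    (hd : d ≡ 2 [ZMOD 3])
    (s t u x y z : ℚ_[3])
    (h1 : (d : ℚ_[3]) * (x * y + 5 * z ^ 2) = s ^ 2)
    (h2 : (d : ℚ_[3]) * ((x + y) * (x + 2 * y)) = s ^ 2 - 5 * t ^ 2)
    (h3 : (d : ℚ_[3]) * ((a : ℚ_[3]) * x ^ 2 + (b : ℚ_[3]) * y ^ 2 + (c : ℚ_[3]) * z ^ 2)
      = u ^ 2) :
    s = 0 ∧ t = 0 ∧ u = 0 ∧ x = 0 ∧ y = 0 ∧ z = 0 := by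
  have hd0 : (d : ℚ_[3]) ≠ 0 := Int.cast_ne_zero.mpr (by have := hd.dvd; omega)
  have hsq : IsSquare (-(d : ℚ_[3])) := by
    obtain ⟨m, hm⟩ := PadicInt.isSquare_intCast_of_modEq_one (by norm_num)
      (show -d ≡ 1 [ZMOD (3 : ℕ)] by unfold Int.ModEq at *; push_cast; omega)
    exact ⟨m, by simpa using congrArg ((↑) : ℤ_[3] → ℚ_[3]) hm⟩
  obtain ⟨rfl, rfl, rfl, rfl⟩ := eq_zero_of_neg_isSquare_mul_eq_sq haniso hd0 hsq h3
  have hs : s = 0 := pow_eq_zero_iff two_ne_zero |>.mp (by rw [← h1]; ring)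
  subst hs
  have ht : t ^ 2 = 0 := by linear_combination (1 / 5 : ℚ_[3]) * h2
  exact ⟨rfl, pow_eq_zero_iff two_ne_zero |>.mp ht, rfl, rfl, rfl, rfl⟩

/-- Suppose `a, b, c` are positive integers such that the quadratic form
`a·x² + b·y² + c·z² + u²` is anisotropic over `ℚ₃`, and `d` is an integer with `d ≡ 2 (mod 3)`.
Then the projective variety `Y⁽ᵈ⁾` in `ℙ⁵` over `ℚ₃` defined by `d(xy + 5z²) = s²`,
`d((x+y)(x+2y)) = s² - 5t²`, `d(ax² + by² + cz²) = u²` has no `ℚ₃`-points: every solution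
in `ℚ₃` is the zero solution. -/
theorem statement4 (a b c d : ℤ) (ha : 0 < a) (hb : 0 < b) (hc : 0 < c)
    (haniso : ∀ x y z u : ℚ_[3],
      (a : ℚ_[3]) * x ^ 2 + (b : ℚ_[3]) * y ^ 2 + (c : ℚ_[3]) * z ^ 2 + u ^ 2 = 0 →
      x = 0 ∧ y = 0 ∧ z = 0 ∧ u = 0)
    (hd : d ≡ 2 [ZMOD 3])
    (s t u x y z : ℚ_[3])
    (h1 : (d : ℚ_[3]) * (x * y + 5 * z ^ 2) = s ^ 2)
    (h2 : (d : ℚ_[3]) * ((x + y) * (x + 2 * y)) = s ^ 2 - 5 * t ^ 2)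
    (h3 : (d : ℚ_[3]) * ((a : ℚ_[3]) * x ^ 2 + (b : ℚ_[3]) * y ^ 2 + (c : ℚ_[3]) * z ^ 2)
      = u ^ 2) :
    s = 0 ∧ t = 0 ∧ u = 0 ∧ x = 0 ∧ y = 0 ∧ z = 0 :=
  statement4_general a b c d haniso hd s t u x y z h1 h2 h3
end

section
/- Let a, b, c be positive integers such that -bc is not a square modulo 5. Then the projective variety in P^5 over ℚ_5 defined by 10(xy + 5z^2) = s^2, 10((x+y)(x+2y)) = s^2 - 5t^2, 10(ax^2 + by^2 + cz^2) = u^2 has no ℚ_5-points. -/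
instance : Fact (Nat.Prime 5) := ⟨by norm_num⟩

/-! Reducing modulo 5 forces `s ≡ u ≡ 0`; after dividing the equations by 5, a second reduction
leaves `xy = 0`, `2(x + y)(x + 2y) = -t²` and `ax² + by² + cz² = 0` over `𝔽₅`, which have only the
trivial solution because `-2` and `-bc` are non-squares there. So every integral solution is
divisible by 5, and as the equations are homogeneous, infinite descent shows that `0` is the only
solution in `ℤ₅`, hence also in its fraction field `ℚ₅`. -/

theorem ZMod.isSquare_intCast_iff {n : ℕ} {m : ℤ} :
    IsSquare (m : ZMod n) ↔ ∃ w : ℤ, w ^ 2 ≡ m [ZMOD n] := by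
  constructor
  · rintro ⟨r, hr⟩
    obtain ⟨w, rfl⟩ := ZMod.intCast_surjective r
    exact ⟨w, (ZMod.intCast_eq_intCast_iff _ _ _).1 (by push_cast; rw [hr, sq])⟩
  · rintro ⟨w, hw⟩
    refine ⟨w, ?_⟩
    rw [← sq]
    exact_mod_cast ((ZMod.intCast_eq_intCast_iff _ _ _).2 hw).symm

theorem PadicInt.p_dvd_iff_toZMod_eq_zero {p : ℕ} [Fact p.Prime] {x : ℤ_[p]} :
    (p : ℤ_[p]) ∣ x ↔ PadicInt.toZMod x = 0 := by
  rw [← RingHom.mem_ker, PadicInt.ker_toZMod, PadicInt.maximalIdeal_eq_span_p,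
    Ideal.mem_span_singleton]

namespace Y10

variable {R : Type*} [CommRing R] (a b c : ℤ)

def IsSolution (s t u x y z : R) : Prop :=
  10 * (x * y + 5 * z ^ 2) = s ^ 2 ∧ 10 * ((x + y) * (x + 2 * y)) = s ^ 2 - 5 * t ^ 2 ∧
    10 * ((a : R) * x ^ 2 + (b : R) * y ^ 2 + (c : R) * z ^ 2) = u ^ 2

variable {a b c} {s t u x y z : R}

theorem IsSolution.mul (h : IsSolution a b c s t u x y z) (r : R) :
    IsSolution a b c (r * s) (r * t) (r * u) (r * x) (r * y) (r * z) := by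
  obtain ⟨h1, h2, h3⟩ := h
  exact ⟨by linear_combination r ^ 2 * h1, by linear_combination r ^ 2 * h2,
    by linear_combination r ^ 2 * h3⟩

theorem IsSolution.of_mul [IsDomain R] {r : R} (hr : r ≠ 0)
    (h : IsSolution a b c (r * s) (r * t) (r * u) (r * x) (r * y) (r * z)) :
    IsSolution a b c s t u x y z := by
  obtain ⟨h1, h2, h3⟩ := h
  have hr2 := pow_ne_zero 2 hr
  exact ⟨mul_left_cancel₀ hr2 (by linear_combination h1),
    mul_left_cancel₀ hr2 (by linear_combination h2), mul_left_cancel₀ hr2 (by linear_combination h3)⟩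

theorem IsSolution.of_map {S : Type*} [CommRing S] {f : R →+* S} (hf : Function.Injective f)
    (h : IsSolution a b c (f s) (f t) (f u) (f x) (f y) (f z)) :
    IsSolution a b c s t u x y z := by
  obtain ⟨h1, h2, h3⟩ := h
  refine ⟨hf ?_, hf ?_, hf ?_⟩ <;> simpa [map_ofNat]

theorem IsSolution.eq_zero_of_forall_dvd [IsDomain R] [WfDvdMonoid R] {π : R} (hπ0 : π ≠ 0)
    (hπ : ¬IsUnit π)
    (hdvd : ∀ {s t u x y z : R}, IsSolution a b c s t u x y z →
      π ∣ s ∧ π ∣ t ∧ π ∣ u ∧ π ∣ x ∧ π ∣ y ∧ π ∣ z)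
    (h : IsSolution a b c s t u x y z) :
    s = 0 ∧ t = 0 ∧ u = 0 ∧ x = 0 ∧ y = 0 ∧ z = 0 := by
  have hpow : ∀ n : ℕ, ∀ {s t u x y z : R}, IsSolution a b c s t u x y z →
      π ^ n ∣ s ∧ π ^ n ∣ t ∧ π ^ n ∣ u ∧ π ^ n ∣ x ∧ π ^ n ∣ y ∧ π ^ n ∣ z := by
    intro n
    induction n with
    | zero => simp
    | succ n ih =>
      intro s t u x y z h
      obtain ⟨⟨s, rfl⟩, ⟨t, rfl⟩, ⟨u, rfl⟩, ⟨x, rfl⟩, ⟨y, rfl⟩, ⟨z, rfl⟩⟩ := hdvd h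
      simpa only [pow_succ', mul_dvd_mul_iff_left hπ0] using ih (h.of_mul hπ0)
  have hzero : ∀ w : R, (∀ n : ℕ, π ^ n ∣ w) → w = 0 := fun w hw => by
    by_contra hw0
    exact FiniteMultiplicity.not_iff_forall.2 hw (.of_not_isUnit hπ hw0)
  exact ⟨hzero s fun n => (hpow n h).1, hzero t fun n => (hpow n h).2.1,
    hzero u fun n => (hpow n h).2.2.1, hzero x fun n => (hpow n h).2.2.2.1,
    hzero y fun n => (hpow n h).2.2.2.2.1, hzero z fun n => (hpow n h).2.2.2.2.2⟩

theorem eq_zero_of_reduction {F : Type*} [Field F] {A B C X Y Z T : F}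
    (h2 : ¬IsSquare (-2 : F)) (hBC : ¬IsSquare (-(B * C)))
    (hXY : X * Y = 0) (hT : 2 * ((X + Y) * (X + 2 * Y)) = -T ^ 2)
    (hQ : A * X ^ 2 + B * Y ^ 2 + C * Z ^ 2 = 0) :
    X = 0 ∧ Y = 0 ∧ Z = 0 ∧ T = 0 := by
  have hC : C ≠ 0 := by
    rintro rfl
    exact hBC ⟨0, by simp⟩
  have hY : Y = 0 := by
    by_contra hY
    have hX : X = 0 := (mul_eq_zero.1 hXY).resolve_right hY
    refine hBC ⟨C * Z / Y, ?_⟩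
    rw [div_mul_div_comm, eq_div_iff (mul_ne_zero hY hY)]
    subst hX
    linear_combination (-C) * hQ
  have hX : X = 0 := by
    by_contra hX
    refine h2 ⟨T / X, ?_⟩
    rw [div_mul_div_comm, eq_div_iff (mul_ne_zero hX hX)]
    subst hY
    linear_combination -hT
  have hT0 : T = 0 := by
    subst hX hY
    exact pow_eq_zero_iff two_ne_zero |>.1 (by linear_combination hT)
  subst hX hY
  have hZ : C * Z ^ 2 = 0 := by linear_combination hQ
  exact ⟨rfl, rfl, pow_eq_zero_iff two_ne_zero |>.1 ((mul_eq_zero.1 hZ).resolve_left hC), hT0⟩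

open PadicInt in
theorem IsSolution.five_dvd (hbc : ¬IsSquare (-(b * c : ZMod 5))) {s t u x y z : ℤ_[5]}
    (h : IsSolution a b c s t u x y z) :
    5 ∣ s ∧ 5 ∣ t ∧ 5 ∣ u ∧ 5 ∣ x ∧ 5 ∣ y ∧ 5 ∣ z := by
  have h5 : (5 : ℤ_[5]) ≠ 0 := by norm_num
  have h5zmod : (5 : ZMod 5) = 0 := rfl
  have five_dvd_of_eq_sq : ∀ {v w : ℤ_[5]}, 10 * v = w ^ 2 → 5 ∣ w := fun {v w} hvw => by
    have := congrArg toZMod hvw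
    rw [map_mul, map_ofNat, show (10 : ZMod 5) = 0 from rfl, zero_mul, map_pow] at this
    exact_mod_cast p_dvd_iff_toZMod_eq_zero.2 (pow_eq_zero_iff two_ne_zero |>.1 this.symm)
  obtain ⟨h1, h2, h3⟩ := h
  obtain ⟨s, rfl⟩ := five_dvd_of_eq_sq h1
  obtain ⟨u, rfl⟩ := five_dvd_of_eq_sq h3
  have e1 : 2 * (x * y + 5 * z ^ 2) = 5 * s ^ 2 :=
    mul_left_cancel₀ h5 (by linear_combination h1)
  have e2 : 2 * ((x + y) * (x + 2 * y)) = 5 * s ^ 2 - t ^ 2 :=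
    mul_left_cancel₀ h5 (by linear_combination h2)
  have e3 : 2 * ((a : ℤ_[5]) * x ^ 2 + (b : ℤ_[5]) * y ^ 2 + (c : ℤ_[5]) * z ^ 2) = 5 * u ^ 2 :=
    mul_left_cancel₀ h5 (by linear_combination h3)
  replace e1 := congrArg toZMod e1
  replace e2 := congrArg toZMod e2
  replace e3 := congrArg toZMod e3
  simp only [map_mul, map_add, map_sub, map_pow, map_ofNat, map_intCast, h5zmod, zero_mul,
    add_zero, zero_sub] at e1 e2 e3
  have h2 : (2 : ZMod 5) ≠ 0 := by decide
  obtain ⟨hx, hy, hz, ht⟩ := eq_zero_of_reduction (by decide) hbc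
    ((mul_eq_zero.1 e1).resolve_left h2) e2 ((mul_eq_zero.1 e3).resolve_left h2)
  simp only [← p_dvd_iff_toZMod_eq_zero, Nat.cast_ofNat] at hx hy hz ht
  exact ⟨dvd_mul_right _ _, ht, dvd_mul_right _ _, hx, hy, hz⟩

theorem IsSolution.eq_zero_of_isFractionRing (R K : Type*) [CommRing R] [IsDomain R] [Field K]
    [Algebra R K] [IsFractionRing R K]
    (hR : ∀ {s t u x y z : R}, IsSolution a b c s t u x y z →
      s = 0 ∧ t = 0 ∧ u = 0 ∧ x = 0 ∧ y = 0 ∧ z = 0)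
    {s t u x y z : K} (h : IsSolution a b c s t u x y z) :
    s = 0 ∧ t = 0 ∧ u = 0 ∧ x = 0 ∧ y = 0 ∧ z = 0 := by
  classical
  obtain ⟨⟨d, hd⟩, hint⟩ :=
    IsLocalization.exist_integer_multiples_of_finset (nonZeroDivisors R) {s, t, u, x, y, z}
  obtain ⟨S, hS⟩ := hint s (by simp)
  obtain ⟨T, hT⟩ := hint t (by simp)
  obtain ⟨U, hU⟩ := hint u (by simp)
  obtain ⟨X, hX⟩ := hint x (by simp)
  obtain ⟨Y, hY⟩ := hint y (by simp)
  obtain ⟨Z, hZ⟩ := hint z (by simp)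
  simp only [Algebra.smul_def] at hS hT hU hX hY hZ
  have hsol : IsSolution a b c S T U X Y Z := .of_map (IsFractionRing.injective R K)
    (by rw [hS, hT, hU, hX, hY, hZ]; exact h.mul _)
  have hd0 : algebraMap R K d ≠ 0 := IsFractionRing.to_map_ne_zero_of_mem_nonZeroDivisors hd
  have hzero : ∀ {w : K} {W : R}, algebraMap R K W = algebraMap R K d * w → W = 0 → w = 0 := by
    rintro w W hW rfl
    exact (mul_eq_zero.1 (hW.symm.trans (map_zero _))).resolve_left hd0
  obtain ⟨hS0, hT0, hU0, hX0, hY0, hZ0⟩ := hR hsol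
  exact ⟨hzero hS hS0, hzero hT hT0, hzero hU hU0, hzero hX hX0, hzero hY hY0, hzero hZ hZ0⟩

end Y10

open Y10

theorem statement5_general (a b c : ℤ)
    (hns : ¬ ∃ w : ℤ, w ^ 2 ≡ -(b * c) [ZMOD 5])
    (s t u x y z : ℚ_[5])
    (h1 : 10 * (x * y + 5 * z ^ 2) = s ^ 2)
    (h2 : 10 * ((x + y) * (x + 2 * y)) = s ^ 2 - 5 * t ^ 2)
    (h3 : 10 * ((a : ℚ_[5]) * x ^ 2 + (b : ℚ_[5]) * y ^ 2 + (c : ℚ_[5]) * z ^ 2) = u ^ 2) :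
    s = 0 ∧ t = 0 ∧ u = 0 ∧ x = 0 ∧ y = 0 ∧ z = 0 := by
  have hbc : ¬IsSquare (-(b * c : ZMod 5)) := by
    have := mt (ZMod.isSquare_intCast_iff (n := 5) (m := -(b * c))).1 (by exact_mod_cast hns)
    exact_mod_cast this
  have h5 : ¬IsUnit (5 : ℤ_[5]) := by exact_mod_cast PadicInt.irreducible_p.not_isUnit
  exact IsSolution.eq_zero_of_isFractionRing ℤ_[5] ℚ_[5]
    (IsSolution.eq_zero_of_forall_dvd (by norm_num) h5 (IsSolution.five_dvd hbc)) ⟨h1, h2, h3⟩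

/-- Let `a, b, c` be positive integers such that `-bc` is not a square modulo `5`.  Then the
projective variety in `ℙ⁵` over `ℚ₅` defined by `10(xy + 5z²) = s²`,
`10((x+y)(x+2y)) = s² - 5t²`, `10(ax² + by² + cz²) = u²` has no `ℚ₅`-points: every solution
in `ℚ₅` is the zero solution. -/
theorem statement5 (a b c : ℤ) (ha : 0 < a) (hb : 0 < b) (hc : 0 < c)
    (hns : ¬ ∃ w : ℤ, w ^ 2 ≡ -(b * c) [ZMOD 5])
    (s t u x y z : ℚ_[5])
    (h1 : 10 * (x * y + 5 * z ^ 2) = s ^ 2)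
    (h2 : 10 * ((x + y) * (x + 2 * y)) = s ^ 2 - 5 * t ^ 2)
    (h3 : 10 * ((a : ℚ_[5]) * x ^ 2 + (b : ℚ_[5]) * y ^ 2 + (c : ℚ_[5]) * z ^ 2) = u ^ 2) :
    s = 0 ∧ t = 0 ∧ u = 0 ∧ x = 0 ∧ y = 0 ∧ z = 0 :=
  statement5_general a b c hns s t u x y z h1 h2 h3
end

section
/- Let a, b, c be positive integers and p a prime with p ∤ 10 (p ≠ 2, 5), such that: for every prime q dividing 5a+5b+c, 5 is not a quadratic residue mod q; and for every prime q dividing 20a+5b+2c, 10 is not a quadratic residue mod q. Let d be a squarefree integer divisible by p. Then the system of congruences d(xy+5z^2) ≡ s^2, d((x+y)(x+2y)) ≡ s^2 - 5t^2, d(ax^2+by^2+cz^2) ≡ u^2 modulo p^2 has no solution (s,t,u,x,y,z) in integers with not all of s,t,u,x,y,z divisible by p. -/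
/-!
Reducing modulo `p` (using `p ∣ d`) forces `p ∣ s, t, u`; then `p² ∣ s², s² - 5t², u²`, and since
`d` is squarefree, `p` divides each of the three quadratic forms. Over `𝔽_p` the factor
`(x + y)(x + 2y)` vanishes: on `x = -y` the first form gives `y² = 5z²`, and on `x = -2y` it gives
`2y² = 5z²`. A nonzero point thus makes `5` (resp. `10`) a square mod `p`, and substituting into
the third form shows `p ∣ 5a + 5b + c` (resp. `p ∣ 20a + 5b + 2c`), contradicting the hypotheses.
-/

theorem Prime.dvd_of_sq_dvd_mul_of_squarefree {α : Type*} [CommMonoidWithZero α] [IsCancelMulZero α]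
    {p d A : α} (hp : Prime p) (hd : Squarefree d) (hpd : p ∣ d) (h : p ^ 2 ∣ d * A) : p ∣ A := by
  obtain ⟨e, rfl⟩ := hpd
  have hpe : ¬ p ∣ e := by
    rintro ⟨f, rfl⟩
    exact hp.not_isUnit (hd p ⟨f, by rw [mul_assoc]⟩)
  rw [sq, mul_assoc] at h
  exact (hp.dvd_or_dvd (mul_dvd_mul_iff_left hp.ne_zero |>.mp h)).resolve_left hpe

namespace Int

variable {p d A w : ℤ}

theorem dvd_of_mul_modEq_sq (hpd : p ∣ d) (h : d * A ≡ w [ZMOD p ^ 2]) : p ∣ w :=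
  Int.modEq_zero_iff_dvd.mp <|
    ((h.of_dvd (dvd_pow_self p two_ne_zero)).symm.trans
      (Int.modEq_zero_iff_dvd.mpr (hpd.mul_right A)))

theorem dvd_of_mul_modEq_sq_of_sq_dvd (hp : Prime p) (hd : Squarefree d) (hpd : p ∣ d)
    (h : d * A ≡ w [ZMOD p ^ 2]) (hw : p ^ 2 ∣ w) : p ∣ A :=
  hp.dvd_of_sq_dvd_mul_of_squarefree hd hpd <|
    Int.modEq_zero_iff_dvd.mp (h.trans (Int.modEq_zero_iff_dvd.mpr hw))

theorem dvd_of_dvd_sq_sub_mul_sq {s t k : ℤ} (hp : Prime p) (hk : ¬ p ∣ k) (hs : p ∣ s)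
    (h : p ∣ s ^ 2 - k * t ^ 2) : p ∣ t := by
  have hkt : p ∣ k * t ^ 2 := by
    simpa using (dvd_pow hs two_ne_zero).sub h
  exact hp.dvd_of_dvd_pow ((hp.dvd_or_dvd hkt).resolve_left hk)

end Int

theorem ZMod.exists_sq_intModEq_of_isSquare {n : ℕ} {k : ℤ} (h : IsSquare (k : ZMod n)) :
    ∃ w : ℤ, w ^ 2 ≡ k [ZMOD n] := by
  obtain ⟨r, hr⟩ := h
  refine ⟨ZMod.cast r, (ZMod.intCast_eq_intCast_iff _ _ n).mp ?_⟩
  rw [hr, Int.cast_pow, ZMod.intCast_zmod_cast, sq]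

section QuadricSystem

variable {F : Type*} [Field F] {a b c x y z : F}

theorem eq_zero_or_isSquare_five_of_add_eq_zero (e1 : x * y + 5 * z ^ 2 = 0)
    (e3 : a * x ^ 2 + b * y ^ 2 + c * z ^ 2 = 0) (hxy : x + y = 0) :
    (x = 0 ∧ y = 0 ∧ z = 0) ∨ (IsSquare (5 : F) ∧ 5 * a + 5 * b + c = 0) := by
  obtain rfl : x = -y := by linear_combination hxy
  have hy : y ^ 2 = 5 * z ^ 2 := by linear_combination -e1
  by_cases hz : z = 0
  · subst hz
    have : y = 0 := pow_eq_zero_iff two_ne_zero |>.mp (by simpa using hy)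
    simp [this]
  · right
    refine ⟨⟨y / z, by field_simp; linear_combination -hy⟩, ?_⟩
    have : (5 * a + 5 * b + c) * z ^ 2 = 0 := by linear_combination e3 - (a + b) * hy
    exact (mul_eq_zero.mp this).resolve_right (pow_ne_zero 2 hz)

theorem eq_zero_or_isSquare_ten_of_add_two_mul_eq_zero (h2 : (2 : F) ≠ 0) (h5 : (5 : F) ≠ 0)
    (e1 : x * y + 5 * z ^ 2 = 0) (e3 : a * x ^ 2 + b * y ^ 2 + c * z ^ 2 = 0)
    (hxy : x + 2 * y = 0) :
    (x = 0 ∧ y = 0 ∧ z = 0) ∨ (IsSquare (10 : F) ∧ 20 * a + 5 * b + 2 * c = 0) := by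
  obtain rfl : x = -2 * y := by linear_combination hxy
  have hy : 2 * y ^ 2 = 5 * z ^ 2 := by linear_combination -e1
  by_cases hz : z = 0
  · subst hz
    have : y = 0 := pow_eq_zero_iff two_ne_zero |>.mp <|
      (mul_eq_zero.mp (by simpa using hy)).resolve_left h2
    simp [this]
  · right
    have hy0 : y ≠ 0 := by
      rintro rfl
      exact pow_ne_zero 2 hz ((mul_eq_zero.mp (by simpa using hy.symm)).resolve_left h5)
    refine ⟨⟨2 * y / z, by field_simp; linear_combination -2 * hy⟩, ?_⟩
    have : (20 * a + 5 * b + 2 * c) * y ^ 2 = 0 := by linear_combination 5 * e3 + c * hy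
    exact (mul_eq_zero.mp this).resolve_right (pow_ne_zero 2 hy0)

theorem eq_zero_or_isSquare_five_or_isSquare_ten (h2 : (2 : F) ≠ 0) (h5 : (5 : F) ≠ 0)
    (e1 : x * y + 5 * z ^ 2 = 0) (e2 : (x + y) * (x + 2 * y) = 0)
    (e3 : a * x ^ 2 + b * y ^ 2 + c * z ^ 2 = 0) :
    (x = 0 ∧ y = 0 ∧ z = 0) ∨ (IsSquare (5 : F) ∧ 5 * a + 5 * b + c = 0) ∨
      (IsSquare (10 : F) ∧ 20 * a + 5 * b + 2 * c = 0) := by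
  rcases mul_eq_zero.mp e2 with hxy | hxy
  · rcases eq_zero_or_isSquare_five_of_add_eq_zero e1 e3 hxy with h | h <;> tauto
  · rcases eq_zero_or_isSquare_ten_of_add_two_mul_eq_zero h2 h5 e1 e3 hxy with h | h <;> tauto

end QuadricSystem

theorem statement6_general (a b c : ℤ)
    (p : ℕ) (hp : p.Prime) (hp10 : ¬ (p : ℤ) ∣ 10)
    (h5 : ∀ q : ℕ, q.Prime → (q : ℤ) ∣ 5 * a + 5 * b + c →
      ¬ ∃ w : ℤ, w ^ 2 ≡ 5 [ZMOD (q : ℤ)])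
    (h10 : ∀ q : ℕ, q.Prime → (q : ℤ) ∣ 20 * a + 5 * b + 2 * c →
      ¬ ∃ w : ℤ, w ^ 2 ≡ 10 [ZMOD (q : ℤ)])
    (d : ℤ) (hd : Squarefree d) (hpd : (p : ℤ) ∣ d) :
    ¬ ∃ s t u x y z : ℤ,
      (d * (x * y + 5 * z ^ 2) ≡ s ^ 2 [ZMOD ((p : ℤ) ^ 2)]) ∧
      (d * ((x + y) * (x + 2 * y)) ≡ s ^ 2 - 5 * t ^ 2 [ZMOD ((p : ℤ) ^ 2)]) ∧
      (d * (a * x ^ 2 + b * y ^ 2 + c * z ^ 2) ≡ u ^ 2 [ZMOD ((p : ℤ) ^ 2)]) ∧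
      ¬ ((p : ℤ) ∣ s ∧ (p : ℤ) ∣ t ∧ (p : ℤ) ∣ u ∧
         (p : ℤ) ∣ x ∧ (p : ℤ) ∣ y ∧ (p : ℤ) ∣ z) := by
  rintro ⟨s, t, u, x, y, z, h1, h2, h3, hprim⟩
  have : Fact p.Prime := ⟨hp⟩
  have hP : Prime (p : ℤ) := Nat.prime_iff_prime_int.mp hp
  have hp5 : ¬ (p : ℤ) ∣ 5 := fun h => hp10 (dvd_mul_of_dvd_right h 2)
  have hs : (p : ℤ) ∣ s := hP.dvd_of_dvd_pow (Int.dvd_of_mul_modEq_sq hpd h1)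
  have ht : (p : ℤ) ∣ t := Int.dvd_of_dvd_sq_sub_mul_sq hP hp5 hs (Int.dvd_of_mul_modEq_sq hpd h2)
  have hu : (p : ℤ) ∣ u := hP.dvd_of_dvd_pow (Int.dvd_of_mul_modEq_sq hpd h3)
  have hs2 := pow_dvd_pow_of_dvd hs 2
  have zero_of_dvd {A : ℤ} (h : (p : ℤ) ∣ A) : (A : ZMod p) = 0 :=
    (ZMod.intCast_zmod_eq_zero_iff_dvd A p).mpr h
  have e1 := zero_of_dvd (Int.dvd_of_mul_modEq_sq_of_sq_dvd hP hd hpd h1 hs2)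
  have e2 := zero_of_dvd (Int.dvd_of_mul_modEq_sq_of_sq_dvd hP hd hpd h2
    (hs2.sub ((pow_dvd_pow_of_dvd ht 2).mul_left 5)))
  have e3 := zero_of_dvd (Int.dvd_of_mul_modEq_sq_of_sq_dvd hP hd hpd h3 (pow_dvd_pow_of_dvd hu 2))
  have h10ne : (2 : ZMod p) * 5 ≠ 0 := by
    rw [← ZMod.intCast_zmod_eq_zero_iff_dvd] at hp10
    exact_mod_cast hp10
  push_cast at e1 e2 e3
  rcases eq_zero_or_isSquare_five_or_isSquare_ten (left_ne_zero_of_mul h10ne)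
      (right_ne_zero_of_mul h10ne) e1 e2 e3 with ⟨hx, hy, hz⟩ | ⟨hsq, hq⟩ | ⟨hsq, hq⟩
  · simp only [ZMod.intCast_zmod_eq_zero_iff_dvd] at hx hy hz
    exact hprim ⟨hs, ht, hu, hx, hy, hz⟩
  · exact h5 p hp ((ZMod.intCast_zmod_eq_zero_iff_dvd _ p).mp (by push_cast; exact hq))
      (ZMod.exists_sq_intModEq_of_isSquare (by exact_mod_cast hsq))
  · exact h10 p hp ((ZMod.intCast_zmod_eq_zero_iff_dvd _ p).mp (by push_cast; exact hq))
      (ZMod.exists_sq_intModEq_of_isSquare (by exact_mod_cast hsq))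

/-- Let `a, b, c` be positive integers and `p` a prime with `p ∤ 10`, such that: for every prime
`q` dividing `5a + 5b + c`, `5` is not a quadratic residue mod `q`; and for every prime `q`
dividing `20a + 5b + 2c`, `10` is not a quadratic residue mod `q`.  Let `d` be a squarefree
integer divisible by `p`.  Then the system of congruences `d(xy+5z²) ≡ s²`,
`d((x+y)(x+2y)) ≡ s² - 5t²`, `d(ax²+by²+cz²) ≡ u²` modulo `p²` has no primitive solution,
i.e. no integer solution with not all of `s, t, u, x, y, z` divisible by `p`. -/
theorem statement6 (a b c : ℤ) (ha : 0 < a) (hb : 0 < b) (hc : 0 < c)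
    (p : ℕ) (hp : p.Prime) (hp10 : ¬ (p : ℤ) ∣ 10)
    (h5 : ∀ q : ℕ, q.Prime → (q : ℤ) ∣ 5 * a + 5 * b + c →
      ¬ ∃ w : ℤ, w ^ 2 ≡ 5 [ZMOD (q : ℤ)])
    (h10 : ∀ q : ℕ, q.Prime → (q : ℤ) ∣ 20 * a + 5 * b + 2 * c →
      ¬ ∃ w : ℤ, w ^ 2 ≡ 10 [ZMOD (q : ℤ)])
    (d : ℤ) (hd : Squarefree d) (hpd : (p : ℤ) ∣ d) :
    ¬ ∃ s t u x y z : ℤ,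
      (d * (x * y + 5 * z ^ 2) ≡ s ^ 2 [ZMOD ((p : ℤ) ^ 2)]) ∧
      (d * ((x + y) * (x + 2 * y)) ≡ s ^ 2 - 5 * t ^ 2 [ZMOD ((p : ℤ) ^ 2)]) ∧
      (d * (a * x ^ 2 + b * y ^ 2 + c * z ^ 2) ≡ u ^ 2 [ZMOD ((p : ℤ) ^ 2)]) ∧
      ¬ ((p : ℤ) ∣ s ∧ (p : ℤ) ∣ t ∧ (p : ℤ) ∣ u ∧
         (p : ℤ) ∣ x ∧ (p : ℤ) ∣ y ∧ (p : ℤ) ∣ z) :=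
  statement6_general a b c p hp hp10 h5 h10 d hd hpd
end

section
/- The involution σ of P^5 given by (s:t:u:x:y:z) ↦ (-s:-t:-u:x:y:z) has no fixed points on the variety Y_a defined by xy + 5z^2 = s^2, (x+y)(x+2y) = s^2 - 5t^2, ax^2 + by^2 + cz^2 = u^2, over an algebraically closed field of characteristic 0, provided abc(5a+5b+c)(20a+5b+2c)(4a^2+b^2)(c^2-100ab)(c^2+5bc+10ac+25ab) ≠ 0. -/
/-!
On a fixed point either `(s, t, u) = 0` or `(x, y, z) = 0`. If `(x, y, z) = 0` the three
equations read `s² = 0`, `s² - 5t² = 0`, `u² = 0`. If `(s, t, u) = 0`, the second equation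
splits the conic into the lines `x + y = 0` and `x + 2y = 0`; on each line the remaining two
equations combine to `(5a + 5b + c) z² = 0`, resp. `(20a + 5b + 2c) z² = 0`, so `z = 0`, and
then `xy = 0` forces `x = y = 0`.
-/

section FixedPoints

variable {k : Type*} [Field k] {a b c s t u x y z : k}

lemma eq_zero_of_add_eq_zero_of_quadrics (hA : 5 * a + 5 * b + c ≠ 0) (hxy : x + y = 0)
    (h1 : x * y + 5 * z ^ 2 = 0) (h3 : a * x ^ 2 + b * y ^ 2 + c * z ^ 2 = 0) :
    x = 0 ∧ y = 0 ∧ z = 0 := by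
  obtain rfl : y = -x := by linear_combination hxy
  have hz : z = 0 := by
    have : (5 * a + 5 * b + c) * z ^ 2 = 0 := by linear_combination (a + b) * h1 + h3
    simpa [hA] using this
  subst hz
  have hx : x = 0 := by
    have : x ^ 2 = 0 := by linear_combination -h1
    simpa using this
  simp [hx]

lemma eq_zero_of_add_two_mul_eq_zero_of_quadrics [CharZero k] (hB : 20 * a + 5 * b + 2 * c ≠ 0)
    (hxy : x + 2 * y = 0) (h1 : x * y + 5 * z ^ 2 = 0)
    (h3 : a * x ^ 2 + b * y ^ 2 + c * z ^ 2 = 0) :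
    x = 0 ∧ y = 0 ∧ z = 0 := by
  obtain rfl : x = -2 * y := by linear_combination hxy
  have hz : z = 0 := by
    have : (20 * a + 5 * b + 2 * c) * z ^ 2 = 0 := by
      linear_combination (4 * a + b) * h1 + 2 * h3
    simpa [hB] using this
  subst hz
  have hy : y = 0 := by
    have : y ^ 2 = 0 := by linear_combination (-1 / 2 : k) * h1
    simpa using this
  simp [hy]

lemma eq_zero_of_quadrics_of_stu_eq_zero [CharZero k] (hA : 5 * a + 5 * b + c ≠ 0)
    (hB : 20 * a + 5 * b + 2 * c ≠ 0) (h1 : x * y + 5 * z ^ 2 = 0)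
    (h2 : (x + y) * (x + 2 * y) = 0) (h3 : a * x ^ 2 + b * y ^ 2 + c * z ^ 2 = 0) :
    x = 0 ∧ y = 0 ∧ z = 0 := by
  rcases mul_eq_zero.mp h2 with hxy | hxy
  · exact eq_zero_of_add_eq_zero_of_quadrics hA hxy h1 h3
  · exact eq_zero_of_add_two_mul_eq_zero_of_quadrics hB hxy h1 h3

lemma eq_zero_of_quadrics_of_xyz_eq_zero [CharZero k] (h1 : s ^ 2 = 0)
    (h2 : s ^ 2 - 5 * t ^ 2 = 0) (h3 : u ^ 2 = 0) : s = 0 ∧ t = 0 ∧ u = 0 := by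
  have hs : s = 0 := by simpa using h1
  subst hs
  have ht : t ^ 2 = 0 := by linear_combination (-1 / 5 : k) * h2
  exact ⟨rfl, by simpa using ht, by simpa using h3⟩

end FixedPoints

theorem statement10_general {k : Type*} [Field k] [CharZero k] (a b c : k)
    (hgen : a * b * c * (5 * a + 5 * b + c) * (20 * a + 5 * b + 2 * c) *
      (4 * a ^ 2 + b ^ 2) * (c ^ 2 - 100 * a * b) *
      (c ^ 2 + 5 * b * c + 10 * a * c + 25 * a * b) ≠ 0)
    (s t u x y z : k)
    (h1 : x * y + 5 * z ^ 2 = s ^ 2)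
    (h2 : (x + y) * (x + 2 * y) = s ^ 2 - 5 * t ^ 2)
    (h3 : a * x ^ 2 + b * y ^ 2 + c * z ^ 2 = u ^ 2)
    (hfix : (s = 0 ∧ t = 0 ∧ u = 0) ∨ (x = 0 ∧ y = 0 ∧ z = 0)) :
    s = 0 ∧ t = 0 ∧ u = 0 ∧ x = 0 ∧ y = 0 ∧ z = 0 := by
  rcases hfix with ⟨rfl, rfl, rfl⟩ | ⟨rfl, rfl, rfl⟩
  · simp only [ne_eq, mul_eq_zero, not_or] at hgen
    obtain ⟨⟨⟨⟨⟨-, hA⟩, hB⟩, -⟩, -⟩, -⟩ := hgen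
    exact ⟨rfl, rfl, rfl, eq_zero_of_quadrics_of_stu_eq_zero hA hB
      (by linear_combination h1) (by linear_combination h2) (by linear_combination h3)⟩
  · simp only [mul_zero, add_zero, zero_pow two_ne_zero] at h1 h2 h3
    obtain ⟨hs, ht, hu⟩ := eq_zero_of_quadrics_of_xyz_eq_zero h1.symm h2.symm h3.symm
    exact ⟨hs, ht, hu, rfl, rfl, rfl⟩

/-- Over an algebraically closed field of characteristic `0`, the involution
`σ : (s:t:u:x:y:z) ↦ (-s:-t:-u:x:y:z)` of `ℙ⁵` has no fixed points on the surface `Y_𝐚`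
defined by `xy + 5z² = s²`, `(x+y)(x+2y) = s² - 5t²`, `ax² + by² + cz² = u²`, provided
`abc(5a+5b+c)(20a+5b+2c)(4a²+b²)(c²-100ab)(c²+5bc+10ac+25ab) ≠ 0`.  A fixed point would be a
point of `Y_𝐚` with either `(s,t,u) = 0` or `(x,y,z) = 0`; no such nonzero solution exists. -/
theorem statement10 {k : Type*} [Field k] [IsAlgClosed k] [CharZero k] (a b c : k)
    (hgen : a * b * c * (5 * a + 5 * b + c) * (20 * a + 5 * b + 2 * c) *
      (4 * a ^ 2 + b ^ 2) * (c ^ 2 - 100 * a * b) *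
      (c ^ 2 + 5 * b * c + 10 * a * c + 25 * a * b) ≠ 0)
    (s t u x y z : k)
    (h1 : x * y + 5 * z ^ 2 = s ^ 2)
    (h2 : (x + y) * (x + 2 * y) = s ^ 2 - 5 * t ^ 2)
    (h3 : a * x ^ 2 + b * y ^ 2 + c * z ^ 2 = u ^ 2)
    (hfix : (s = 0 ∧ t = 0 ∧ u = 0) ∨ (x = 0 ∧ y = 0 ∧ z = 0)) :
    s = 0 ∧ t = 0 ∧ u = 0 ∧ x = 0 ∧ y = 0 ∧ z = 0 :=
  statement10_general a b c hgen s t u x y z h1 h2 h3 hfix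
end

section
/- Let L be a free ℤ-module of rank 15 with basis G_1, F_1, ..., F_14 equipped with the symmetric bilinear form determined by F_i·F_i = G_1·G_1 = 0, F_1·G_1 = 4, F_i·G_1 = 2 for i ≠ 1, and F_i·F_j = 2 for i ≠ j. Then L is nondegenerate and its discriminant (determinant of the Gram matrix) is ±2^17. -/
/-!
Write `e` for the all-ones vector and `eₐ, e_b` for the indicator vectors of the two special
indices. The Gram matrix is `2 (U Vᵀ - 1)` with `U = [e, eₐ, e_b]` and `V = [e, e_b, eₐ]`, so
Sylvester's identity `det (1 - U Vᵀ) = det (1 - Vᵀ U)` reduces its determinant to that of a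
`3 × 3` matrix, which is `-4` whatever the rank `N`: the determinant is `(-1)^(N+1) 2^(N+2)`.
-/

/-- The Gram matrix of the rank-15 lattice with basis `G₁, F₁, …, F₁₄` (index `0`
corresponding to `G₁` and indices `1, …, 14` to `F₁, …, F₁₄`), with pairings
`Fᵢ·Fᵢ = G₁·G₁ = 0`, `F₁·G₁ = 4`, `Fᵢ·G₁ = 2` for `i ≠ 1`, and `Fᵢ·Fⱼ = 2` for `i ≠ j`. -/
def gram15 : Matrix (Fin 15) (Fin 15) ℤ :=
  Matrix.of fun i j =>
    if i = j then 0
    else if (i = 0 ∧ j = 1) ∨ (i = 1 ∧ j = 0) then 4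
    else 2

open Matrix

section TwoPointGram

variable {ι : Type*} [DecidableEq ι]

def twoPointGram (a b : ι) : Matrix ι ι ℤ :=
  of fun i j =>
    if i = j then 0
    else if (i = a ∧ j = b) ∨ (i = b ∧ j = a) then 4
    else 2

def onesAndIndicatorCols (a b : ι) : Matrix ι (Fin 3) ℤ :=
  of fun i => ![1, if i = a then 1 else 0, if i = b then 1 else 0]

variable {a b : ι}

theorem twoPointGram_eq_smul (hab : a ≠ b) :
    twoPointGram a b =
      (2 : ℤ) • (onesAndIndicatorCols a b * (onesAndIndicatorCols b a)ᵀ - 1) := by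
  ext i j
  simp only [twoPointGram, onesAndIndicatorCols, of_apply, Matrix.smul_apply, Matrix.sub_apply,
    mul_apply, transpose_apply, Fin.sum_univ_three, cons_val_zero, cons_val_one, cons_val,
    mul_one, mul_ite, mul_zero, one_apply, Int.zsmul_eq_mul]
  split_ifs <;> simp_all

theorem transpose_mul_onesAndIndicatorCols [Fintype ι] (hab : a ≠ b) :
    (onesAndIndicatorCols b a)ᵀ * onesAndIndicatorCols a b =
      !![(Fintype.card ι : ℤ), 1, 1; 1, 0, 1; 1, 1, 0] := by
  ext k l
  fin_cases k <;> fin_cases l <;> simp [onesAndIndicatorCols, mul_apply, hab, hab.symm]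

theorem det_one_sub_of_fin_three (n : ℤ) : (1 - !![n, 1, 1; 1, 0, 1; 1, 1, 0]).det = -4 := by
  simp [det_fin_three]

theorem det_twoPointGram [Fintype ι] (hab : a ≠ b) :
    (twoPointGram a b).det = (-1) ^ (Fintype.card ι + 1) * 2 ^ (Fintype.card ι + 2) := by
  set U := onesAndIndicatorCols a b
  set V := onesAndIndicatorCols b a
  calc (twoPointGram a b).det
      = 2 ^ Fintype.card ι * (-1) ^ Fintype.card ι * (1 - Vᵀ * U).det := by
        rw [twoPointGram_eq_smul hab, det_smul, ← neg_sub, det_neg, det_one_sub_mul_comm,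
          mul_assoc]
    _ = 2 ^ Fintype.card ι * (-1) ^ Fintype.card ι * -4 := by
        rw [transpose_mul_onesAndIndicatorCols hab, det_one_sub_of_fin_three]
    _ = (-1) ^ (Fintype.card ι + 1) * 2 ^ (Fintype.card ι + 2) := by ring

end TwoPointGram

/-- The lattice `L = ⟨G₁, F₁, …, F₁₄⟩` with the intersection pairing above is nondegenerate
with discriminant `±2¹⁷`. -/
theorem statement11 : gram15.det ≠ 0 ∧ (gram15.det = 2 ^ 17 ∨ gram15.det = -(2 ^ 17)) := by
  have h : gram15.det = 2 ^ 17 := by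
    rw [show gram15 = twoPointGram 0 1 from rfl, det_twoPointGram (by decide)]
    norm_num
  exact ⟨by rw [h]; positivity, Or.inl h⟩
end

section
/- Let N be an even unimodular lattice of rank 10 containing a sublattice M of index 2, where M has basis D_1, C_1, ..., C_9 with pairings C_i^2 = D_1^2 = 0, C_1·D_1 = 2, C_i·D_1 = 1 (i≥2), C_i·C_j = 1 (i≠j). If R ∈ N represents the nontrivial class of N/M and 2R = n_1 C_1 + ... + n_9 C_9 + n_10 D_1 with n_i ∈ {0,1}, then n_2 = n_3 = ... = n_9 = 1 and n_1 + n_10 = 1; i.e., 2R equals either C_1 + C_2 + ... + C_9 or D_1 + C_2 + ... + C_9 in N. -/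
/-!
Pairing `2R = ∑ nᵢ Cᵢ + n₁₀ D₁` with `Cᵢ` (`i ≥ 2`) gives `∑ⱼ nⱼ - nᵢ + n₁₀ = 2 (R·Cᵢ)`, so the
`nᵢ` with `i ≥ 2` share one parity and hence, being `0` or `1`, one value `n`; then
`n₁ + n + n₁₀` is even. If `n = 0`, either `2R = 0`, impossible since `R ≠ 0` and the form is
nondegenerate, or `2R = C₁ + D₁`, whose square `4` is not divisible by `8`, although
`(2R)² = 4 R²` is for an even form.

In Lean, `C₁, …, C₉` are `C 0, …, C 8`.
-/

open Finset

section Pairing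

variable {N : Type*} [AddCommGroup N] [Module ℤ N] (B : N →ₗ[ℤ] N →ₗ[ℤ] ℤ)

theorem pairing_two_smul_left (R v : N) : B (2 • R) v = 2 * B R v := by
  simp only [LinearMap.map_smul_of_tower, LinearMap.smul_apply, Int.nsmul_eq_mul, Nat.cast_ofNat]

theorem pairing_two_smul_self (R : N) : B (2 • R) (2 • R) = 4 * B R R := by
  simp only [LinearMap.map_smul_of_tower, LinearMap.smul_apply, Int.nsmul_eq_mul, Nat.cast_ofNat]
  ring

theorem eq_zero_of_two_smul_eq_zero (hB : Function.Injective B) {R : N} (h : 2 • R = 0) :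
    R = 0 :=
  hB <| LinearMap.ext fun v => by
    have := pairing_two_smul_left B R v
    simp only [h, map_zero, LinearMap.zero_apply] at this ⊢
    omega

theorem two_smul_ne_of_not_eight_dvd (heven : ∀ v : N, 2 ∣ B v v) (R : N) {w : N}
    (hw : ¬ 8 ∣ B w w) : 2 • R ≠ w := by
  rintro rfl
  obtain ⟨k, hk⟩ := heven R
  exact hw ⟨k, by rw [pairing_two_smul_self, hk]; ring⟩

theorem pairing_sum_smul_left {ι : Type*} [Fintype ι] [DecidableEq ι] (C : ι → N)
    (hCC : ∀ i, B (C i) (C i) = 0) (hCij : ∀ i j, i ≠ j → B (C i) (C j) = 1)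
    (n : ι → ℤ) (i : ι) : B (∑ j, n j • C j) (C i) = ∑ j, n j - n i := by
  have hterm : ∀ j, n j * B (C j) (C i) = n j - if j = i then n j else 0 := by
    intro j
    by_cases h : j = i
    · simp [h, hCC]
    · simp [h, hCij j i h]
  simp [LinearMap.sum_apply, hterm, Finset.sum_sub_distrib]

theorem two_dvd_sum_sub_add_of_two_smul_eq {ι : Type*} [Fintype ι] [DecidableEq ι]
    (C : ι → N) (hCC : ∀ i, B (C i) (C i) = 0) (hCij : ∀ i j, i ≠ j → B (C i) (C j) = 1)
    {D R : N} {n : ι → ℤ} {d : ℤ} (h2R : 2 • R = (∑ j, n j • C j) + d • D)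
    {i : ι} (hDC : B D (C i) = 1) : 2 ∣ (∑ j, n j) - n i + d := by
  have hpair := pairing_two_smul_left B R (C i)
  rw [h2R, map_add, LinearMap.add_apply, pairing_sum_smul_left B C hCC hCij,
    LinearMap.map_smul_of_tower, LinearMap.smul_apply, hDC, smul_eq_mul, mul_one] at hpair
  exact ⟨B R (C i), by linarith⟩

end Pairing

theorem coeffs_of_two_dvd_sum_sub_add {n : Fin 9 → ℤ} {d : ℤ} (hn : ∀ i, n i = 0 ∨ n i = 1)
    (hd : d = 0 ∨ d = 1) (hpar : ∀ i ≠ 0, 2 ∣ (∑ j, n j) - n i + d) :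
    (∀ i ≠ 0, n i = n 1) ∧ ((n 1 = 1 ∧ n 0 + d = 1) ∨ (n 1 = 0 ∧ n 0 = d)) := by
  have hconst : ∀ i ≠ 0, n i = n 1 := fun i hi => by
    have := hpar i hi; have := hpar 1 (by decide)
    rcases hn i with h | h <;> rcases hn 1 with h' | h' <;> omega
  have hsum : ∑ i, n i = n 0 + 8 * n 1 := by
    rw [← add_sum_erase _ _ (mem_univ 0), sum_congr rfl fun j hj => hconst j (ne_of_mem_erase hj)]
    simp
  refine ⟨hconst, ?_⟩
  have := hpar 1 (by decide)
  rw [hsum] at this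
  rcases hn 0 with h0 | h0 <;> rcases hn 1 with h1 | h1 <;> omega

theorem statement13_general {N : Type*} [AddCommGroup N] [Module ℤ N]
    (B : N →ₗ[ℤ] N →ₗ[ℤ] ℤ)
    (hsymm : ∀ v w : N, B v w = B w v)
    (heven : ∀ v : N, 2 ∣ B v v)
    (hunimod : Function.Bijective (B : N → N →ₗ[ℤ] ℤ))
    (D1 : N) (C : Fin 9 → N)
    (hCC : ∀ i, B (C i) (C i) = 0) (hDD : B D1 D1 = 0)
    (hC0D : B (C 0) D1 = 2) (hCD : ∀ i, i ≠ 0 → B (C i) D1 = 1)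
    (hCij : ∀ i j, i ≠ j → B (C i) (C j) = 1)
    (M : Submodule ℤ N)
    (R : N) (hR : R ∉ M)
    (nC : Fin 9 → ℤ) (nD : ℤ)
    (hn : ∀ i, nC i = 0 ∨ nC i = 1) (hnD : nD = 0 ∨ nD = 1)
    (h2R : 2 • R = (∑ i, nC i • C i) + nD • D1) :
    ((∀ i, i ≠ 0 → nC i = 1) ∧ nC 0 + nD = 1) ∧
    (2 • R = ∑ i, C i ∨ 2 • R = D1 + ∑ i ∈ Finset.univ.erase 0, C i) := by
  have hpar : ∀ i ≠ 0, 2 ∣ (∑ j, nC j) - nC i + nD := fun i hi =>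
    two_dvd_sum_sub_add_of_two_smul_eq B C hCC hCij h2R ((hsymm _ _).trans (hCD i hi))
  obtain ⟨hconst, hcases⟩ := coeffs_of_two_dvd_sum_sub_add hn hnD hpar
  have hdecomp : 2 • R = nC 0 • C 0 + ∑ i ∈ univ.erase 0, nC 1 • C i + nD • D1 := by
    rw [h2R, ← add_sum_erase _ _ (mem_univ 0),
      sum_congr rfl fun j hj => by rw [hconst j (ne_of_mem_erase hj)]]
  rcases hcases with ⟨h1, h0D⟩ | ⟨h1, h0D⟩
  · refine ⟨⟨fun i hi => (hconst i hi).trans h1, h0D⟩, ?_⟩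
    rcases hn 0 with h0 | h0
    · right
      rw [hdecomp, h0, h1, show nD = 1 by omega]
      simp only [zero_smul, one_smul, zero_add, add_comm]
    · left
      rw [hdecomp, h0, h1, show nD = 0 by omega, ← add_sum_erase _ _ (mem_univ 0)]
      simp only [zero_smul, one_smul, add_zero]
  · exfalso
    rcases hn 0 with h0 | h0
    · have hR0 : R = 0 := eq_zero_of_two_smul_eq_zero B hunimod.injective
        (by simpa [h0, h1, ← h0D] using hdecomp)
      exact hR (hR0 ▸ M.zero_mem)
    · have h2R' : 2 • R = C 0 + D1 := by simpa [h0, h1, ← h0D] using hdecomp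
      refine two_smul_ne_of_not_eight_dvd B heven R ?_ h2R'
      simp [hCC, hDD, hC0D, hsymm D1 (C 0)]

/-- Let `N` be an even unimodular lattice of rank 10 containing a sublattice `M` of index 2,
where `M` has basis `D₁, C₁, …, C₉` with pairings `Cᵢ² = D₁² = 0`, `C₁·D₁ = 2`, `Cᵢ·D₁ = 1`
for `i ≥ 2`, `Cᵢ·Cⱼ = 1` for `i ≠ j`.  If `R ∈ N` represents the nontrivial class of `N/M`
and `2R = n₁C₁ + ⋯ + n₉C₉ + n₁₀D₁` with each `nᵢ ∈ {0,1}`, then `n₂ = ⋯ = n₉ = 1` and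
`n₁ + n₁₀ = 1`; i.e. `2R` equals `C₁ + C₂ + ⋯ + C₉` or `D₁ + C₂ + ⋯ + C₉`. -/
theorem statement13 {N : Type*} [AddCommGroup N] [Module ℤ N]
    [Module.Free ℤ N] [Module.Finite ℤ N]
    (B : N →ₗ[ℤ] N →ₗ[ℤ] ℤ)
    (hsymm : ∀ v w : N, B v w = B w v)
    (heven : ∀ v : N, 2 ∣ B v v)
    (hunimod : Function.Bijective (B : N → N →ₗ[ℤ] ℤ))
    (hrank : Module.finrank ℤ N = 10)
    (D1 : N) (C : Fin 9 → N)
    (hCC : ∀ i, B (C i) (C i) = 0) (hDD : B D1 D1 = 0)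
    (hC0D : B (C 0) D1 = 2) (hCD : ∀ i, i ≠ 0 → B (C i) D1 = 1)
    (hCij : ∀ i j, i ≠ j → B (C i) (C j) = 1)
    (M : Submodule ℤ N) (hM : M = Submodule.span ℤ (insert D1 (Set.range C)))
    (hindex : Nat.card (N ⧸ M) = 2)
    (R : N) (hR : R ∉ M)
    (nC : Fin 9 → ℤ) (nD : ℤ)
    (hn : ∀ i, nC i = 0 ∨ nC i = 1) (hnD : nD = 0 ∨ nD = 1)
    (h2R : 2 • R = (∑ i, nC i • C i) + nD • D1) :
    ((∀ i, i ≠ 0 → nC i = 1) ∧ nC 0 + nD = 1) ∧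
    (2 • R = ∑ i, C i ∨ 2 • R = D1 + ∑ i ∈ Finset.univ.erase 0, C i) :=
  statement13_general B hsymm heven hunimod D1 C hCC hDD hC0D hCD hCij M R hR nC nD hn hnD h2R
end

section
/- The degree-6 polynomial 7T^6 + 6T^5 + 9T^4 + 4T^3 + 9T^2 + 6T + 7 has no roots that are roots of unity. -/
/-!
The polynomial is palindromic: `f(T) = T³ g(T + T⁻¹)` with `g = 7X³ + 6X² - 12X - 8`. If a root
`ζ` of `f` were a root of unity, `ζ + ζ⁻¹` would be an algebraic integer and a root of `g`. Since
`g` is primitive and has no rational root, it is irreducible over `ℤ`, so the monic minimal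
polynomial of `ζ + ζ⁻¹` over `ℤ` is associated to `g`, forcing its leading coefficient `7` to be a
unit.
-/

open Polynomial

theorem isIntegral_of_pow_eq_one {R S : Type*} [CommRing R] [Ring S] [Algebra R S] {x : S}
    {n : ℕ} (hn : 0 < n) (hx : x ^ n = 1) : IsIntegral R x :=
  ⟨X ^ n - 1, monic_X_pow_sub_C 1 hn.ne', by simp [hx]⟩

theorem isIntegral_add_inv_of_pow_eq_one {R K : Type*} [CommRing R] [Field K] [Algebra R K]
    {x : K} {n : ℕ} (hn : 0 < n) (hx : x ^ n = 1) : IsIntegral R (x + x⁻¹) :=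
  (isIntegral_of_pow_eq_one hn hx).add
    (isIntegral_of_pow_eq_one hn (by rw [inv_pow, hx, inv_one]))

theorem IsIntegral.isUnit_leadingCoeff_of_irreducible {R S : Type*} [CommRing R] [IsDomain R]
    [IsIntegrallyClosed R] [CommRing S] [IsDomain S] [Algebra R S] [Module.IsTorsionFree R S]
    {s : S} (hs : IsIntegral R s) {p : R[X]} (hp : Irreducible p) (hps : aeval s p = 0) :
    IsUnit p.leadingCoeff := by
  obtain ⟨q, rfl⟩ := minpoly.isIntegrallyClosed_dvd hs hps
  have hq : IsUnit q := (hp.isUnit_or_isUnit rfl).resolve_left (minpoly.not_isUnit R s)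
  rw [leadingCoeff_mul, (minpoly.monic hs).leadingCoeff, one_mul]
  exact hq.map leadingCoeffHom

noncomputable def traceCubic : ℤ[X] := 7 * X ^ 3 + 6 * X ^ 2 - 12 * X - 8

theorem aeval_add_inv_traceCubic {K : Type*} [Field K] {z : K} (hz : z ≠ 0) :
    z ^ 3 * aeval (z + z⁻¹) traceCubic =
      7 * z ^ 6 + 6 * z ^ 5 + 9 * z ^ 4 + 4 * z ^ 3 + 9 * z ^ 2 + 6 * z + 7 := by
  simp only [traceCubic, map_sub, map_add, map_mul, map_pow, aeval_X, map_ofNat]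
  field_simp
  ring

theorem natDegree_traceCubic : traceCubic.natDegree = 3 := by
  unfold traceCubic; compute_degree!

theorem leadingCoeff_traceCubic : traceCubic.leadingCoeff = 7 := by
  rw [leadingCoeff, natDegree_traceCubic]; simp [traceCubic, coeff_X]

theorem traceCubic_isPrimitive : traceCubic.IsPrimitive := by
  refine isPrimitive_iff_isUnit_of_C_dvd.mpr fun r hr => isUnit_of_dvd_one ?_
  rw [C_dvd_iff_dvd_coeff] at hr
  have h7 : r ∣ 7 := by simpa [traceCubic, coeff_X] using hr 3
  have h6 : r ∣ 6 := by simpa [traceCubic, coeff_X] using hr 2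
  simpa using dvd_sub h7 h6

/-- `7x` is a root of a monic integer cubic, so it is an integer; that cubic has no roots mod 5. -/
theorem traceCubic_map_rat_not_isRoot (x : ℚ) :
    ¬ (traceCubic.map (Int.castRingHom ℚ)).IsRoot x := by
  intro hx
  replace hx : 7 * x ^ 3 + 6 * x ^ 2 - 12 * x - 8 = 0 := by simpa [traceCubic] using hx
  have hmonic : (X ^ 3 + 6 * X ^ 2 - 84 * X - 392 : ℤ[X]).Monic := by monicity!
  obtain ⟨m, hm⟩ := isInteger_of_is_root_of_monic hmonic (r := 7 * x) (by
    simp only [map_sub, map_add, map_mul, map_pow, aeval_X, map_ofNat]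
    linear_combination 49 * hx)
  replace hm : (m : ℚ) ^ 3 + 6 * m ^ 2 - 84 * m - 392 = 0 := by
    rw [show (m : ℚ) = 7 * x from hm]; linear_combination 49 * hx
  have h5 := congrArg (Int.cast : ℤ → ZMod 5) (show m ^ 3 + 6 * m ^ 2 - 84 * m - 392 = 0 by
    exact_mod_cast hm)
  push_cast at h5
  generalize (m : ZMod 5) = y at h5
  revert y; decide

theorem irreducible_traceCubic : Irreducible traceCubic :=
  (IsPrimitive.Int.irreducible_iff_irreducible_map_cast traceCubic_isPrimitive).mpr <|
    irreducible_of_degree_le_three_of_not_isRoot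
      (by rw [natDegree_map_eq_of_injective (Int.castRingHom ℚ).injective_int,
        natDegree_traceCubic]; decide)
      traceCubic_map_rat_not_isRoot

/-- The degree-6 polynomial `7T⁶ + 6T⁵ + 9T⁴ + 4T³ + 9T² + 6T + 7` has no roots that are
roots of unity. -/
theorem statement16 (ζ : ℂ)
    (h : 7 * ζ ^ 6 + 6 * ζ ^ 5 + 9 * ζ ^ 4 + 4 * ζ ^ 3 + 9 * ζ ^ 2 + 6 * ζ + 7 = 0) :
    ¬ ∃ n : ℕ, 0 < n ∧ ζ ^ n = 1 := by
  rintro ⟨n, hn, hζ⟩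
  have hζ0 : ζ ≠ 0 := by rintro rfl; simp at h
  have hroot : aeval (ζ + ζ⁻¹) traceCubic = 0 := by
    simpa [hζ0, h] using aeval_add_inv_traceCubic hζ0
  have hunit := (isIntegral_add_inv_of_pow_eq_one (R := ℤ) hn hζ)
    |>.isUnit_leadingCoeff_of_irreducible irreducible_traceCubic hroot
  rw [leadingCoeff_traceCubic, Int.isUnit_iff] at hunit
  omega
end

section
/- The point (0, 0, √(821/5), -2, 1, √(2/5)) is a ℚ_3-point of the variety defined by xy + 5z^2 = s^2, (x+y)(x+2y) = s^2 - 5t^2, 12x^2 + 111y^2 + 13z^2 = u^2; in particular, 821/5 and 2/5 are squares in ℚ_3, and with x = -2, y = 1, z = √(2/5): xy + 5z^2 = -2 + 2 = 0 = s^2 with s = 0, (x+y)(x+2y) = (-1)(0) = 0 = 0 - 5·0, and 12·4 + 111 + 13·(2/5) = 48 + 111 + 26/5 = 821/5 = u^2. -/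
/-! Hensel's lemma applied to `X ^ 2 - c` at the approximate root `1` shows that every
`c ∈ ℚ_[p]` with `‖c - 1‖ < 1` is a square when `p` is odd, since the derivative `2` is then
a unit. Both `2/5` and `821/5` are `≡ 1 (mod 3)`. -/

open Polynomial

namespace PadicInt

variable {p : ℕ} [Fact p.Prime]

theorem norm_two_eq_one (hp : p ≠ 2) : ‖(2 : ℤ_[p])‖ = 1 := by
  rw [show (2 : ℤ_[p]) = ((2 : ℕ) : ℤ_[p]) by norm_cast, norm_natCast_eq_one_iff,
    Nat.coprime_two_right]
  exact (Fact.out : p.Prime).odd_of_ne_two hp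

theorem isSquare_of_norm_sub_one_lt_one (hp : p ≠ 2) {c : ℤ_[p]} (hc : ‖c - 1‖ < 1) :
    IsSquare c := by
  have hderiv : ‖(X ^ 2 - C c).derivative.aeval (1 : ℤ_[p])‖ = 1 := by
    simpa [derivative_sub, one_add_one_eq_two] using norm_two_eq_one hp
  obtain ⟨z, hz, -⟩ := hensels_lemma (F := X ^ 2 - C c) (a := 1) (by
    rw [hderiv, one_pow]
    simpa [norm_sub_rev] using hc)
  exact ⟨z, by simpa [sub_eq_zero, sq, eq_comm] using hz⟩

end PadicInt

namespace Padic

variable {p : ℕ} [Fact p.Prime]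

theorem isSquare_of_norm_sub_one_lt_one (hp : p ≠ 2) {x : ℚ_[p]} (hx : ‖x - 1‖ < 1) :
    IsSquare x := by
  have hx_le : ‖x‖ ≤ 1 := by
    simpa using (nonarchimedean (x - 1) 1).trans (max_le hx.le (by simp))
  obtain ⟨c, rfl⟩ : ∃ c : ℤ_[p], (c : ℚ_[p]) = x := ⟨⟨x, hx_le⟩, rfl⟩
  obtain ⟨r, rfl⟩ := PadicInt.isSquare_of_norm_sub_one_lt_one hp (c := c) (by
    simpa [PadicInt.norm_def] using hx)
  exact ⟨r, by push_cast; rfl⟩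

theorem norm_intCast_div_sub_one_lt_one {a b : ℤ} (hab : (p : ℤ) ∣ a - b) (hb : ¬(p : ℤ) ∣ b) :
    ‖(a : ℚ_[p]) / b - 1‖ < 1 := by
  have hb_norm : ‖(b : ℚ_[p])‖ = 1 :=
    le_antisymm (norm_int_le_one b) (not_lt.mp (mt norm_intCast_lt_one_iff.mp hb))
  have hb0 : (b : ℚ_[p]) ≠ 0 := norm_ne_zero_iff.mp (hb_norm ▸ one_ne_zero)
  rw [div_sub_one hb0, norm_div, hb_norm, div_one, ← Int.cast_sub]
  exact norm_intCast_lt_one_iff.mpr hab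

theorem isSquare_intCast_div (hp : p ≠ 2) {a b : ℤ} (hab : (p : ℤ) ∣ a - b)
    (hb : ¬(p : ℤ) ∣ b) : IsSquare ((a : ℚ_[p]) / b) :=
  isSquare_of_norm_sub_one_lt_one hp (norm_intCast_div_sub_one_lt_one hab hb)

end Padic

/-- The point `(0 : 0 : √(821/5) : -2 : 1 : √(2/5))` is a `ℚ₃`-point of the variety defined by
`xy + 5z² = s²`, `(x+y)(x+2y) = s² - 5t²`, `12x² + 111y² + 13z² = u²`.  In particular `2/5`
and `821/5` are squares in `ℚ₃`, and for any square roots `z, u` of them the three equations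
hold with `s = 0`, `t = 0`, `x = -2`, `y = 1`. -/
theorem statement18 :
    IsSquare ((2 : ℚ_[3]) / 5) ∧ IsSquare ((821 : ℚ_[3]) / 5) ∧
    ∀ z u : ℚ_[3], z ^ 2 = 2 / 5 → u ^ 2 = 821 / 5 →
      ((-2 : ℚ_[3]) * 1 + 5 * z ^ 2 = 0 ^ 2 ∧
       ((-2 : ℚ_[3]) + 1) * ((-2) + 2 * 1) = 0 ^ 2 - 5 * 0 ^ 2 ∧
       12 * (-2 : ℚ_[3]) ^ 2 + 111 * 1 ^ 2 + 13 * z ^ 2 = u ^ 2) := by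
  have h2 : IsSquare ((2 : ℚ_[3]) / 5) := by
    simpa only [Int.cast_ofNat] using
      Padic.isSquare_intCast_div (p := 3) (a := 2) (b := 5) (by decide) (by decide) (by decide)
  have h821 : IsSquare ((821 : ℚ_[3]) / 5) := by
    simpa only [Int.cast_ofNat] using
      Padic.isSquare_intCast_div (p := 3) (a := 821) (b := 5) (by decide) (by decide) (by decide)
  refine ⟨h2, h821, fun z u hz hu => ⟨?_, by norm_num, ?_⟩⟩
  · linear_combination 5 * hz
  · linear_combination 13 * hz - hu
end
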